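/- arXiv:math/0407025 — 3 statements merged into one kernel-verified Lean document; each statement's English description precedes it below -/
import Mathlib

section
/- Let s, m > 0 with s ≤ m, let n be a real number and r_M a real number with n > r_M + 1/2 and r_M + s/m − n > 0. Define V = (s/m)/(r_M + s/m − n) · (r_M, 1) in ℝ². Then the point N where the segment from (−s/m, 0) to V meets the line y = x/(n−1) is N = (s/m)/(2(r_M − n) + 1 + s/m) · (n−1, 1), and its second coordinate is strictly greater than 1. -/
lemma seg_key (a d D rM n : ℝ) (hd : d ≠ 0) (hD : D ≠ 0)
    (hdd : d = rM + a - n) (hDD : D = 2*(rM - n) + 1 + a) :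
    (1 - d/D) • ((-a, 0) : ℝ × ℝ) + (d/D) • ((a/d) • ((rM, 1) : ℝ × ℝ))
      = (a/D) • ((n - 1, 1) : ℝ × ℝ) := by
  simp only [Prod.smul_def, smul_eq_mul, Prod.mk_add_mk, Prod.mk.injEq]
  subst hdd hDD
  constructor <;> (field_simp; ring)

theorem stmt_4 (s m n rM : ℝ) (hs : 0 < s) (hm : 0 < m) (hsm : s ≤ m)
    (hn : n > rM + 1/2) (hden : rM + s/m - n > 0) :
    let V : ℝ × ℝ := ((s/m) / (rM + s/m - n)) • (rM, 1)
    let N : ℝ × ℝ := ((s/m) / (2*(rM - n) + 1 + s/m)) • (n - 1, 1)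
    N ∈ segment ℝ ((-(s/m), 0) : ℝ × ℝ) V ∧ N.1 = (n - 1) * N.2 ∧ N.2 > 1 := by
  intro V N
  have ha : 0 < s / m := div_pos hs hm
  have ha1 : s / m ≤ 1 := (div_le_one hm).mpr hsm
  have hD : 0 < 2*(rM - n) + 1 + s/m := by nlinarith
  have haD : 2*(rM - n) + 1 + s/m < s/m := by nlinarith
  have hd0 : rM + s/m - n ≠ 0 := ne_of_gt hden
  have hD0 : 2*(rM - n) + 1 + s/m ≠ 0 := ne_of_gt hD
  have hN2 : N.2 = (s/m) / (2*(rM - n) + 1 + s/m) := by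
    simp [N]
  refine ⟨?_, ?_, ?_⟩
  · refine ⟨1 - (rM + s/m - n)/(2*(rM - n) + 1 + s/m),
      (rM + s/m - n)/(2*(rM - n) + 1 + s/m), ?_, ?_, by ring, ?_⟩
    · have h1 : (rM + s/m - n)/(2*(rM - n) + 1 + s/m) ≤ 1 := by
        rw [div_le_one hD]; nlinarith
      linarith
    · positivity
    · exact seg_key (s/m) (rM + s/m - n) (2*(rM - n) + 1 + s/m) rM n hd0 hD0 rfl rfl
  · simp only [N, Prod.smul_def, smul_eq_mul, mul_one]; ring
  · rw [gt_iff_lt, hN2, lt_div_iff₀ hD]; linarith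
end

section
/- Let r_m < 0 < r_M ≤ 1 be real numbers with r_M ≥ 1/2, set D = r_M − r_m and assume D ≥ 2. If (r_m − r_M)/(2·r_M·r_m) ≤ 1 then r_M ≥ (D − √(D·(D−2)))/2. -/
theorem stmt_9 (rm rM : ℝ) (h1 : rm < 0) (h2 : 0 < rM) (h3 : rM ≤ 1)
    (h4 : 1/2 ≤ rM) (hD : 2 ≤ rM - rm)
    (h : (rm - rM) / (2 * rM * rm) ≤ 1) :
    rM ≥ ((rM - rm) - Real.sqrt ((rM - rm) * ((rM - rm) - 2))) / 2 := by
  have hneg : 2 * rM * rm < 0 := by nlinarith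
  have h' : 1 * (2 * rM * rm) ≤ rm - rM := (div_le_iff_of_neg hneg).mp h
  have hsq : (rM - rm - 2 * rM) ^ 2 ≤ (rM - rm) * ((rM - rm) - 2) := by nlinarith
  have h3' : Real.sqrt ((rM - rm - 2 * rM) ^ 2) ≤
      Real.sqrt ((rM - rm) * ((rM - rm) - 2)) := Real.sqrt_le_sqrt hsq
  have habs : |rM - rm - 2 * rM| = Real.sqrt ((rM - rm - 2 * rM) ^ 2) :=
    (Real.sqrt_sq_eq_abs _).symm
  have := le_abs_self (rM - rm - 2 * rM)
  linarith
end

section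
/- Let ‖·‖ be a norm on ℝ² with minimal value s > 0 on ℤ² \ {0}, attained with ‖(1,0)‖ = s. If in addition ‖(0,1)‖ ≥ s and the points V = (1, 1/r_M) and W = (−1, −1/r_m) (with r_m < 0 < r_M) satisfy ‖V‖ ≤ s and ‖W‖ ≤ s, then (r_m − r_M)/(2·r_M·r_m) ≤ 1. -/
theorem stmt_16 (N : ℝ × ℝ → ℝ)
    (htri : ∀ a b : ℝ × ℝ, N (a + b) ≤ N a + N b)
    (hhom : ∀ (c : ℝ) (a : ℝ × ℝ), N (c • a) = |c| * N a)
    (hdef : ∀ a : ℝ × ℝ, N a = 0 → a = 0)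
    (s : ℝ) (hs : 0 < s)
    (hmin : ∀ a b : ℤ, (a, b) ≠ (0, 0) → s ≤ N ((a : ℝ), (b : ℝ)))
    (hmu : N (1, 0) = s) (hlam : s ≤ N (0, 1))
    (rm rM : ℝ) (h1 : rm < 0) (h2 : 0 < rM)
    (hV : N (1, 1/rM) ≤ s) (hW : N (-1, -1/rm) ≤ s) :
    (rm - rM) / (2 * rM * rm) ≤ 1 := by
  set t : ℝ := (rm - rM) / (2 * rM * rm) with ht
  have ht0 : 0 < t := by
    apply div_pos_of_neg_of_neg <;> nlinarith
  have hrm : rm ≠ 0 := ne_of_lt h1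
  have hrM : rM ≠ 0 := ne_of_gt h2
  have hsum : ((1:ℝ), 1/rM) + (-1, -1/rm) = (2*t) • ((0:ℝ), (1:ℝ)) := by
    simp [Prod.ext_iff, ht]
    field_simp
    ring
  have h3 : N ((2*t) • ((0:ℝ), (1:ℝ))) ≤ 2 * s := by
    rw [← hsum]
    calc N _ ≤ N (1, 1/rM) + N (-1, -1/rm) := htri _ _
    _ ≤ 2 * s := by linarith
  rw [hhom, abs_of_pos (by linarith : (0:ℝ) < 2*t)] at h3
  have : t * s ≤ t * N (0, 1) := by nlinarith
  nlinarith
end
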